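/- arXiv:2206.08216 — 3 statements merged into one kernel-verified Lean document; each statement's English description precedes it below -/
import Mathlib

section
/- Let λ > 0, ν > 0 and let f(x; λ, ν) be the GE density. Then the mean of the GE distribution satisfies ∫₀^∞ x f(x; λ, ν) dx = (ψ(ν + 1) − ψ(1)) / λ, where ψ is the digamma function. -/
open Real Set

/-- The generalized exponential (GE) density with rate `l > 0` and shape `v > 0`. -/
noncomputable def geDensity (l v x : ℝ) : ℝ :=
  l * v * Real.exp (-(l * x)) * (1 - Real.exp (-(l * x))) ^ (v - 1)

/-- The digamma function `ψ(x) = d/dx log Γ(x)`. -/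
noncomputable def digamma : ℝ → ℝ := deriv fun x => Real.log (Real.Gamma x)

/-!
The substitution `u = 1 - exp (-λ x)` turns the mean into
`-(ν / λ) ∫₀¹ u^(ν-1) log (1 - u) du`. That integral is the derivative in `b`, at `b = 1`, of
the Beta integral `B(ν, b) = ∫₀¹ u^(ν-1) (1-u)^(b-1) du = Γ(ν) Γ(b) / Γ(ν + b)`: differentiating
under the integral sign on one side and the Gamma quotient on the other gives
`B(ν, b) (ψ(b) - ψ(ν + b))`, and `B(ν, 1) = 1 / ν`.
-/

open MeasureTheory Filter Topology

lemma hasDerivAt_Gamma_mul_digamma {x : ℝ} (hx : 0 < x) :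
    HasDerivAt Gamma (Gamma x * digamma x) x := by
  have hd : DifferentiableAt ℝ Gamma x :=
    differentiableAt_Gamma fun m => by linarith [(Nat.cast_nonneg m : (0 : ℝ) ≤ m)]
  have hΓ := (Gamma_pos_of_pos hx).ne'
  rw [digamma, deriv.log hd hΓ, mul_div_cancel₀ _ hΓ]
  exact hd.hasDerivAt

lemma rpow_mul_abs_log_le {y s t : ℝ} (hy0 : 0 < y) (hy1 : y ≤ 1) (ht : 0 < t) :
    y ^ s * |log y| ≤ y ^ (s - t) / t := by
  have hlog := (abs_log_mul_self_rpow_lt y t hy0 hy1 ht).le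
  calc y ^ s * |log y| = y ^ (s - t) * |log y * y ^ t| := by
        rw [abs_mul, abs_of_pos (rpow_pos_of_pos hy0 t), mul_comm |log y|, ← mul_assoc,
          ← rpow_add hy0, sub_add_cancel]
    _ ≤ y ^ (s - t) * (1 / t) := by gcongr
    _ = y ^ (s - t) / t := by ring

section Beta

variable {a b : ℝ}

lemma ofReal_cpow_mul_one_sub_cpow {x : ℝ} (hx : x ∈ Icc (0 : ℝ) 1) :
    (x : ℂ) ^ ((a : ℂ) - 1) * (1 - (x : ℂ)) ^ ((b : ℂ) - 1) =
      ((x ^ (a - 1) * (1 - x) ^ (b - 1) : ℝ) : ℂ) := by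
  rw [Complex.ofReal_mul, Complex.ofReal_cpow hx.1, Complex.ofReal_cpow (sub_nonneg.2 hx.2)]
  push_cast
  ring

lemma integrableOn_rpow_mul_one_sub_rpow (ha : 0 < a) (hb : 0 < b) :
    IntegrableOn (fun x => x ^ (a - 1) * (1 - x) ^ (b - 1)) (Ioo (0 : ℝ) 1) := by
  have h : IntegrableOn
      (fun x : ℝ => ((x : ℂ) ^ ((a : ℂ) - 1) * (1 - (x : ℂ)) ^ ((b : ℂ) - 1)).re) (Ioc 0 1) :=
    (Complex.betaIntegral_convergent (u := a) (v := b) (by simpa) (by simpa)).1.re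
  refine (h.congr_fun (fun x hx => ?_) measurableSet_Ioc).mono_set Ioo_subset_Ioc_self
  rw [ofReal_cpow_mul_one_sub_cpow (Ioc_subset_Icc_self hx), Complex.ofReal_re]

lemma integral_rpow_mul_one_sub_rpow (ha : 0 < a) (hb : 0 < b) :
    ∫ x in Ioo (0 : ℝ) 1, x ^ (a - 1) * (1 - x) ^ (b - 1) =
      Gamma a * Gamma b / Gamma (a + b) := by
  have h := Complex.betaIntegral_eq_Gamma_mul_div a b (by simpa) (by simpa)
  rw [Complex.betaIntegral, intervalIntegral.integral_congr (g := fun x : ℝ => ((x ^ (a - 1) *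
      (1 - x) ^ (b - 1) : ℝ) : ℂ)) fun x hx => ofReal_cpow_mul_one_sub_cpow
      (by rwa [uIcc_of_le zero_le_one] at hx), intervalIntegral.integral_ofReal,
    ← Complex.ofReal_add, Complex.Gamma_ofReal, Complex.Gamma_ofReal, Complex.Gamma_ofReal] at h
  rw [← integral_Ioc_eq_integral_Ioo, ← intervalIntegral.integral_of_le zero_le_one]
  exact_mod_cast h

lemma hasDerivAt_Gamma_mul_Gamma_div_Gamma_add (ha : 0 < a) (hb : 0 < b) :
    HasDerivAt (fun b => Gamma a * Gamma b / Gamma (a + b))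
      (Gamma a * Gamma b / Gamma (a + b) * (digamma b - digamma (a + b))) b := by
  have hab := Gamma_pos_of_pos (add_pos ha hb)
  refine (((hasDerivAt_Gamma_mul_digamma hb).const_mul (Gamma a)).fun_div
    ((hasDerivAt_Gamma_mul_digamma (add_pos ha hb)).comp_const_add a b) hab.ne').congr_deriv ?_
  field_simp

lemma hasDerivAt_integral_rpow_mul_one_sub_rpow (ha : 0 < a) (hb : 0 < b) :
    HasDerivAt (fun b => ∫ x in Ioo (0 : ℝ) 1, x ^ (a - 1) * (1 - x) ^ (b - 1))
      (∫ x in Ioo (0 : ℝ) 1, x ^ (a - 1) * (1 - x) ^ (b - 1) * log (1 - x)) b := by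
  have h_bound : ∀ᵐ x ∂volume.restrict (Ioo (0 : ℝ) 1), ∀ c ∈ Metric.ball b (b / 2),
      ‖x ^ (a - 1) * (1 - x) ^ (c - 1) * log (1 - x)‖ ≤
        x ^ (a - 1) * (1 - x) ^ (b / 4 - 1) / (b / 4) := by
    refine ae_restrict_of_forall_mem measurableSet_Ioo fun x ⟨hx0, hx1⟩ c hc => ?_
    have hc : b / 2 < c := by
      have := (abs_lt.1 (Real.dist_eq c b ▸ Metric.mem_ball.1 hc)).1
      linarith
    have hy0 : 0 < 1 - x := by linarith
    have hy1 : 1 - x ≤ 1 := by linarith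
    rw [norm_mul, norm_mul, Real.norm_of_nonneg (rpow_nonneg hx0.le _),
      Real.norm_of_nonneg (rpow_nonneg hy0.le _), Real.norm_eq_abs, mul_assoc, mul_div_assoc]
    gcongr
    calc (1 - x) ^ (c - 1) * |log (1 - x)| ≤ (1 - x) ^ (c - 1 - b / 4) / (b / 4) :=
          rpow_mul_abs_log_le hy0 hy1 (by positivity)
      _ ≤ (1 - x) ^ (b / 4 - 1) / (b / 4) :=
          div_le_div_of_nonneg_right (rpow_le_rpow_of_exponent_ge hy0 hy1 (by linarith))
            (by positivity)
  have h_diff : ∀ᵐ x ∂volume.restrict (Ioo (0 : ℝ) 1), ∀ c ∈ Metric.ball b (b / 2),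
      HasDerivAt (fun c => x ^ (a - 1) * (1 - x) ^ (c - 1))
        (x ^ (a - 1) * (1 - x) ^ (c - 1) * log (1 - x)) c := by
    refine ae_restrict_of_forall_mem measurableSet_Ioo fun x ⟨_, hx1⟩ c _ => ?_
    refine (((hasDerivAt_id c).sub_const 1).const_rpow (sub_pos.2 hx1)).const_mul _
      |>.congr_deriv ?_
    simp only [id]
    ring
  exact (hasDerivAt_integral_of_dominated_loc_of_deriv_le
    (F := fun c x => x ^ (a - 1) * (1 - x) ^ (c - 1)) (Metric.ball_mem_nhds b (half_pos hb))
    (.of_forall fun c => by fun_prop) (integrableOn_rpow_mul_one_sub_rpow ha hb)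
    (by fun_prop) h_bound
    ((integrableOn_rpow_mul_one_sub_rpow ha (by positivity : 0 < b / 4)).div_const _)
    h_diff).2

lemma integral_rpow_mul_one_sub_rpow_mul_log (ha : 0 < a) (hb : 0 < b) :
    ∫ x in Ioo (0 : ℝ) 1, x ^ (a - 1) * (1 - x) ^ (b - 1) * log (1 - x) =
      Gamma a * Gamma b / Gamma (a + b) * (digamma b - digamma (a + b)) :=
  (hasDerivAt_integral_rpow_mul_one_sub_rpow ha hb).unique <|
    (hasDerivAt_Gamma_mul_Gamma_div_Gamma_add ha hb).congr_of_eventuallyEq <|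
      eventually_of_mem (Ioi_mem_nhds hb) fun _ hc => integral_rpow_mul_one_sub_rpow ha hc

end Beta

section ExpSubstitution

variable {l : ℝ}

lemma image_one_sub_exp_neg_mul_Ioi (hl : 0 < l) :
    (fun x => 1 - exp (-(l * x))) '' Ioi 0 = Ioo 0 1 := by
  ext u
  constructor
  · rintro ⟨x, hx, rfl⟩
    have hlt : exp (-(l * x)) < 1 := exp_lt_one_iff.2 (by nlinarith [mem_Ioi.1 hx])
    exact ⟨by linarith, by linarith [exp_pos (-(l * x))]⟩
  · rintro ⟨hu0, hu1⟩
    refine ⟨-log (1 - u) / l, div_pos (neg_pos.2 (log_neg (by linarith) (by linarith))) hl, ?_⟩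
    dsimp only
    rw [mul_div_cancel₀ _ hl.ne', neg_neg, exp_log (by linarith), sub_sub_cancel]

lemma injOn_one_sub_exp_neg_mul (hl : 0 < l) :
    InjOn (fun x => 1 - exp (-(l * x))) (Ioi 0) := fun x _ y _ hxy => by
  simpa [hl.ne'] using hxy

lemma integral_Ioi_comp_one_sub_exp_neg_mul (hl : 0 < l) (g : ℝ → ℝ) :
    ∫ x in Ioi 0, l * exp (-(l * x)) * g (1 - exp (-(l * x))) = ∫ u in Ioo 0 1, g u := by
  have hderiv : ∀ x ∈ Ioi (0 : ℝ),
      HasDerivWithinAt (fun x => 1 - exp (-(l * x))) (l * exp (-(l * x))) (Ioi 0) x := by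
    intro x _
    refine (((hasDerivAt_id x).const_mul l).neg.exp.const_sub 1).hasDerivWithinAt.congr_deriv ?_
    simp only [id, mul_one, Pi.neg_apply]
    ring
  rw [← image_one_sub_exp_neg_mul_Ioi hl,
    integral_image_eq_integral_abs_deriv_smul measurableSet_Ioi hderiv
      (injOn_one_sub_exp_neg_mul hl)]
  refine setIntegral_congr_fun measurableSet_Ioi fun x _ => ?_
  rw [smul_eq_mul, abs_of_pos (by positivity)]

end ExpSubstitution

/-- The mean of the GE distribution: `∫₀^∞ x f(x; λ, ν) dx = (ψ(ν+1) − ψ(1)) / λ`. -/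
theorem ge_mean (l v : ℝ) (hl : 0 < l) (hv : 0 < v) :
    ∫ x in Ioi (0 : ℝ), x * geDensity l v x = (digamma (v + 1) - digamma 1) / l := by
  -- the integrand of `integral_rpow_mul_one_sub_rpow_mul_log` at `b = 1`, scaled
  set g : ℝ → ℝ := fun u => -(v / l) * (u ^ (v - 1) * (1 - u) ^ ((1 : ℝ) - 1) * log (1 - u))
  have hsubst : ∀ x, x * geDensity l v x = l * exp (-(l * x)) * g (1 - exp (-(l * x))) := by
    intro x
    simp only [g, geDensity, sub_sub_cancel, log_exp, sub_self, rpow_zero]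
    field_simp
  calc ∫ x in Ioi (0 : ℝ), x * geDensity l v x
      = ∫ u in Ioo 0 1, g u := by
        simp_rw [hsubst]
        exact integral_Ioi_comp_one_sub_exp_neg_mul hl g
    _ = -(v / l) * (Gamma v * Gamma 1 / Gamma (v + 1) * (digamma 1 - digamma (v + 1))) := by
        rw [integral_const_mul, integral_rpow_mul_one_sub_rpow_mul_log hv one_pos]
    _ = (digamma (v + 1) - digamma 1) / l := by
        rw [Gamma_one, Gamma_add_one hv.ne']
        field_simp
        ring
end

section
/- Let α ≥ 0 and ν > 1. For λ > 0, define K_α(λ, ν) = J_{2α}(λ, ν) − ξ_α(λ, ν) ξ_α(λ, ν)ᵀ, where J_β(λ, ν) = ∫₀^∞ u(x) u(x)ᵀ f(x; λ, ν)^(1+β) dx and ξ_α(λ, ν) = ∫₀^∞ u(x) f(x; λ, ν)^(1+α) dx with u(x) = (u_λ(x), u_ν(x))ᵀ the GE score vector. Then for every λ > 0: K_α(λ, ν)_{11} = λ^(2α−2) K_α(1, ν)_{11}, K_α(λ, ν)_{12} = K_α(λ, ν)_{21} = λ^(2α−1) K_α(1, ν)_{12}, and K_α(λ, ν)_{22}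 = λ^(2α) K_α(1, ν)_{22}. -/
open Real Set

/-- The GE score vector `u(x) = (u_λ(x), u_ν(x))ᵀ`. -/
noncomputable def geScore (l v x : ℝ) : Fin 2 → ℝ :=
  ![1 / l - x + (v - 1) * x * Real.exp (-(l * x)) / (1 - Real.exp (-(l * x))),
    1 / v + Real.log (1 - Real.exp (-(l * x)))]

/-- `J_β(λ, ν) = ∫₀^∞ u(x) u(x)ᵀ f(x; λ, ν)^(1+β) dx`. -/
noncomputable def geJ (b l v : ℝ) : Matrix (Fin 2) (Fin 2) ℝ :=
  Matrix.of fun i j =>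
    ∫ x in Ioi (0 : ℝ), geScore l v x i * geScore l v x j * geDensity l v x ^ (1 + b)

/-- `ξ_α(λ, ν) = ∫₀^∞ u(x) f(x; λ, ν)^(1+α) dx`. -/
noncomputable def geXi (a l v : ℝ) : Fin 2 → ℝ := fun i =>
  ∫ x in Ioi (0 : ℝ), geScore l v x i * geDensity l v x ^ (1 + a)

/-- `K_α(λ, ν) = J_{2α}(λ, ν) − ξ_α(λ, ν) ξ_α(λ, ν)ᵀ`. -/
noncomputable def geK (a l v : ℝ) : Matrix (Fin 2) (Fin 2) ℝ :=
  geJ (2 * a) l v - Matrix.of fun i j => geXi a l v i * geXi a l v j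

/-- The asymptotic covariance matrix `Σ_α(λ, ν) = J_α⁻¹ K_α J_α⁻¹` of the rescaled MDPDE. -/
noncomputable def geSigma (a l v : ℝ) : Matrix (Fin 2) (Fin 2) ℝ :=
  (geJ a l v)⁻¹ * geK a l v * (geJ a l v)⁻¹


/-! The substitution `y = λx` turns `f(x; λ, ν)` into `λ f(y; 1, ν)`, `u_λ(x)` into `λ⁻¹ u_λ(y)` at
rate `1`, and leaves `u_ν` unchanged, while `dx = λ⁻¹ dy`. Hence every integral defining `J_β` and
`ξ_α` picks up a fixed power of `λ`, and so does every entry of `K_α`. -/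

/-- The score `u_λ` scales like `λ⁻¹`, the score `u_ν` like `λ⁰`. -/
def geScoreWeight : Fin 2 → ℝ := ![1, 0]

lemma geDensity_eq_mul_geDensity_one (l v x : ℝ) :
    geDensity l v x = l * geDensity 1 v (l * x) := by
  simp only [geDensity, one_mul]
  ring

lemma geDensity_nonneg {l v x : ℝ} (hl : 0 ≤ l) (hv : 0 ≤ v) (hx : 0 ≤ x) :
    0 ≤ geDensity l v x := by
  have hexp : 0 ≤ 1 - exp (-(l * x)) := by
    linarith [exp_le_one_iff.mpr (neg_nonpos.mpr (mul_nonneg hl hx))]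
  have := rpow_nonneg hexp (v - 1)
  unfold geDensity
  positivity

lemma geDensity_rpow_eq {l v x : ℝ} (hl : 0 ≤ l) (hv : 0 ≤ v) (hx : 0 ≤ x) (p : ℝ) :
    geDensity l v x ^ p = l ^ p * geDensity 1 v (l * x) ^ p := by
  rw [geDensity_eq_mul_geDensity_one,
    mul_rpow hl (geDensity_nonneg zero_le_one hv (mul_nonneg hl hx))]

lemma geScore_eq_rpow_mul_geScore_one {l : ℝ} (hl : l ≠ 0) (v x : ℝ) (i : Fin 2) :
    geScore l v x i = l ^ (-geScoreWeight i) * geScore 1 v (l * x) i := by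
  fin_cases i
  · show geScore l v x 0 = l ^ (-geScoreWeight 0) * geScore 1 v (l * x) 0
    rcases eq_or_ne x 0 with rfl | hx
    · simp [geScore, geScoreWeight, rpow_neg_one]
    have hexp : 1 - exp (-(l * x)) ≠ 0 := by
      rw [sub_ne_zero, ne_comm, Ne, exp_eq_one_iff]
      simpa using mul_ne_zero hl hx
    simp only [geScore, geScoreWeight, Matrix.cons_val_zero, rpow_neg_one, one_mul]
    field_simp
  · simp [geScore, geScoreWeight]

lemma setIntegral_Ioi_eq_rpow_mul {l c : ℝ} (hl : 0 < l) {F G : ℝ → ℝ}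
    (h : ∀ x, 0 < x → F x = l ^ (c + 1) * G (l * x)) :
    ∫ x in Ioi (0 : ℝ), F x = l ^ c * ∫ x in Ioi (0 : ℝ), G x := by
  rw [MeasureTheory.setIntegral_congr_fun measurableSet_Ioi h, MeasureTheory.integral_const_mul,
    MeasureTheory.integral_comp_mul_left_Ioi G 0 hl, mul_zero, smul_eq_mul, ← mul_assoc,
    ← rpow_neg_one, ← rpow_add hl, add_neg_cancel_right]

section Scaling

variable {l v : ℝ} (hl : 0 < l) (hv : 0 ≤ v)
include hl hv

lemma geJ_apply_eq_rpow_mul (b : ℝ) (i j : Fin 2) :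
    geJ b l v i j = l ^ (b - geScoreWeight i - geScoreWeight j) * geJ b 1 v i j := by
  simp only [geJ, Matrix.of_apply]
  refine setIntegral_Ioi_eq_rpow_mul hl fun x hx => ?_
  rw [geScore_eq_rpow_mul_geScore_one hl.ne', geScore_eq_rpow_mul_geScore_one hl.ne',
    geDensity_rpow_eq hl.le hv hx.le, show b - geScoreWeight i - geScoreWeight j + 1
      = -geScoreWeight i + -geScoreWeight j + (1 + b) by ring, rpow_add hl _ (1 + b),
    rpow_add hl (-geScoreWeight i)]
  ring

lemma geXi_eq_rpow_mul (a : ℝ) (i : Fin 2) :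
    geXi a l v i = l ^ (a - geScoreWeight i) * geXi a 1 v i := by
  refine setIntegral_Ioi_eq_rpow_mul hl fun x hx => ?_
  rw [geScore_eq_rpow_mul_geScore_one hl.ne', geDensity_rpow_eq hl.le hv hx.le,
    show a - geScoreWeight i + 1 = -geScoreWeight i + (1 + a) by ring,
    rpow_add hl _ (1 + a)]
  ring

lemma geK_apply_eq_rpow_mul (a : ℝ) (i j : Fin 2) :
    geK a l v i j = l ^ (2 * a - geScoreWeight i - geScoreWeight j) * geK a 1 v i j := by
  have hpow : l ^ (a - geScoreWeight i) * l ^ (a - geScoreWeight j)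
      = l ^ (2 * a - geScoreWeight i - geScoreWeight j) := by
    rw [← rpow_add hl]; ring_nf
  simp only [geK, Matrix.sub_apply, Matrix.of_apply, geJ_apply_eq_rpow_mul hl hv,
    geXi_eq_rpow_mul hl hv, ← hpow]
  ring

end Scaling

lemma geK_apply_comm (a l v : ℝ) (i j : Fin 2) : geK a l v i j = geK a l v j i := by
  simp only [geK, geJ, Matrix.sub_apply, Matrix.of_apply, mul_comm (geScore l v _ i),
    mul_comm (geXi a l v i)]

theorem geK_scaling_general (a v : ℝ) (hv : 1 < v) :
    ∀ l : ℝ, 0 < l →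
      geK a l v 0 0 = l ^ (2 * a - 2) * geK a 1 v 0 0 ∧
      geK a l v 0 1 = l ^ (2 * a - 1) * geK a 1 v 0 1 ∧
      geK a l v 1 0 = l ^ (2 * a - 1) * geK a 1 v 0 1 ∧
      geK a l v 1 1 = l ^ (2 * a) * geK a 1 v 1 1 := by
  intro l hl
  have hscale := geK_apply_eq_rpow_mul hl (zero_le_one.trans hv.le) a
  refine ⟨?_, ?_, ?_, ?_⟩
  · rw [hscale]; congr 2; norm_num [geScoreWeight]; ring
  · rw [hscale]; congr 2; norm_num [geScoreWeight]
  · rw [hscale, geK_apply_comm a 1 v 1 0]; congr 2; norm_num [geScoreWeight]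
  · rw [hscale]; congr 2; norm_num [geScoreWeight]

/-- Scaling of the entries of `K_α(λ, ν) = J_{2α}(λ, ν) − ξ_α ξ_αᵀ` in the rate `λ`. -/
theorem geK_scaling (a v : ℝ) (ha : 0 ≤ a) (hv : 1 < v) :
    ∀ l : ℝ, 0 < l →
      geK a l v 0 0 = l ^ (2 * a - 2) * geK a 1 v 0 0 ∧
      geK a l v 0 1 = l ^ (2 * a - 1) * geK a 1 v 0 1 ∧
      geK a l v 1 0 = l ^ (2 * a - 1) * geK a 1 v 0 1 ∧
      geK a l v 1 1 = l ^ (2 * a) * geK a 1 v 1 1 :=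
  geK_scaling_general a v hv
end

section
/- Let α > 0, λ > 0, and ν > 1, let f(x; λ, ν) be the GE density, and let u_λ, u_ν be the GE score functions. Then the weighted score functions x ↦ u_λ(x) f(x; λ, ν)^α and x ↦ u_ν(x) f(x; λ, ν)^α both tend to 0 as x → 0⁺ and tend to 0 as x → ∞. -/
open Real Set Filter

/-- The GE score function with respect to the rate parameter `λ`. -/
noncomputable def geScoreRate (l v x : ℝ) : ℝ :=
  1 / l - x + (v - 1) * x * Real.exp (-(l * x)) / (1 - Real.exp (-(l * x)))

/-- The GE score function with respect to the shape parameter `ν`. -/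
noncomputable def geScoreShape (l v x : ℝ) : ℝ :=
  1 / v + Real.log (1 - Real.exp (-(l * x)))

/-! Put `S = 1 - exp (-(λ x))`. For `x > 0` the weight factors as
`f ^ α = (λ ν) ^ α * exp (-(α λ) x) * S ^ (α (ν - 1))`, with `α (ν - 1) > 0`.
As `x → 0⁺`, `S → 0⁺` and `x / S → 1 / λ`, so `u_λ → ν / λ` stays bounded, while both `S ^ (α (ν - 1))`
and `log S * S ^ (α (ν - 1))` vanish. As `x → ∞`, `S → 1` and `u_ν → 1 / ν`, and the factor
`exp (-(α λ) x)` beats the linear growth of `u_λ`. -/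

open scoped Topology

section OneSubExpNeg

variable {l : ℝ}

lemma one_sub_exp_neg_mul_pos (hl : 0 < l) {x : ℝ} (hx : 0 < x) : 0 < 1 - exp (-(l * x)) := by
  simpa using mul_pos hl hx

lemma tendsto_exp_neg_mul_atTop (hl : 0 < l) : Tendsto (fun x => exp (-(l * x))) atTop (𝓝 0) :=
  tendsto_exp_atBot.comp (tendsto_neg_atTop_atBot.comp (tendsto_id.const_mul_atTop hl))

lemma tendsto_one_sub_exp_neg_mul_atTop (hl : 0 < l) :
    Tendsto (fun x => 1 - exp (-(l * x))) atTop (𝓝 1) := by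
  simpa using (tendsto_exp_neg_mul_atTop hl).const_sub 1

lemma tendsto_one_sub_exp_neg_mul_nhdsGT (hl : 0 < l) :
    Tendsto (fun x => 1 - exp (-(l * x))) (𝓝[>] 0) (𝓝[>] 0) := by
  refine tendsto_nhdsWithin_of_tendsto_nhds_of_eventually_within _ ?_
    (eventually_nhdsWithin_of_forall fun x hx => one_sub_exp_neg_mul_pos hl hx)
  have : Continuous fun x => 1 - exp (-(l * x)) := by fun_prop
  simpa using this.continuousWithinAt (s := Ioi 0) (x := 0) |>.tendsto

lemma tendsto_div_one_sub_exp_neg_mul_nhdsGT (hl : 0 < l) :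
    Tendsto (fun x => x / (1 - exp (-(l * x)))) (𝓝[>] 0) (𝓝 l⁻¹) := by
  have hd : HasDerivAt (fun x => 1 - exp (-(l * x))) l 0 := by
    simpa using (((hasDerivAt_id (0 : ℝ)).const_mul l).neg.exp).const_sub 1
  refine (hd.tendsto_slope_zero_right.inv₀ hl.ne').congr fun x => ?_
  simp [div_eq_mul_inv, mul_comm]

end OneSubExpNeg

lemma tendsto_rpow_nhdsGT_zero {c : ℝ} (hc : 0 < c) :
    Tendsto (fun y : ℝ => y ^ c) (𝓝[>] 0) (𝓝 0) := by
  simpa [zero_rpow hc.ne'] using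
    (continuousAt_rpow_const 0 c (.inr hc.le)).tendsto.mono_left nhdsWithin_le_nhds

section Density

variable {a l v : ℝ}

lemma geDensity_rpow (hlv : 0 ≤ l * v) {x : ℝ} (hlx : 0 ≤ l * x) :
    geDensity l v x ^ a =
      (l * v) ^ a * exp (-(a * l) * x) * (1 - exp (-(l * x))) ^ (a * (v - 1)) := by
  have hS : 0 ≤ 1 - exp (-(l * x)) := by simpa using hlx
  rw [geDensity, mul_rpow (by positivity) (rpow_nonneg hS _), mul_rpow hlv (exp_pos _).le,
    ← exp_mul, ← rpow_mul hS]
  ring_nf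

lemma tendsto_rpow_mul_geDensity_rpow_atTop (s : ℝ) (ha : 0 < a) (hl : 0 < l) (hv : 0 ≤ v) :
    Tendsto (fun x => x ^ s * geDensity l v x ^ a) atTop (𝓝 0) := by
  have h := ((tendsto_rpow_mul_exp_neg_mul_atTop_nhds_zero s (a * l) (by positivity)).const_mul
    ((l * v) ^ a)).mul
    ((tendsto_one_sub_exp_neg_mul_atTop hl).rpow_const (p := a * (v - 1)) (.inl one_ne_zero))
  rw [mul_zero, zero_mul] at h
  refine h.congr' <| (eventually_ge_atTop 0).mono fun x hx => ?_
  dsimp only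
  rw [geDensity_rpow (by positivity) (by positivity)]
  ring

lemma tendsto_geDensity_rpow_atTop (ha : 0 < a) (hl : 0 < l) (hv : 0 ≤ v) :
    Tendsto (fun x => geDensity l v x ^ a) atTop (𝓝 0) := by
  simpa using tendsto_rpow_mul_geDensity_rpow_atTop 0 ha hl hv

lemma tendsto_comp_one_sub_exp_neg_mul_mul_geDensity_rpow_nhdsGT (hl : 0 < l) (hv : 0 ≤ v)
    {g : ℝ → ℝ} (hg : Tendsto (fun y => g y * y ^ (a * (v - 1))) (𝓝[>] 0) (𝓝 0)) :
    Tendsto (fun x => g (1 - exp (-(l * x))) * geDensity l v x ^ a) (𝓝[>] 0) (𝓝 0) := by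
  have hexp : Tendsto (fun x => (l * v) ^ a * exp (-(a * l) * x)) (𝓝[>] 0) (𝓝 ((l * v) ^ a)) := by
    have : Continuous fun x => (l * v) ^ a * exp (-(a * l) * x) := by fun_prop
    simpa using this.continuousWithinAt (s := Ioi 0) (x := 0) |>.tendsto
  have h := hexp.mul (hg.comp (tendsto_one_sub_exp_neg_mul_nhdsGT hl))
  rw [mul_zero] at h
  refine h.congr' <| eventually_nhdsWithin_of_forall fun x hx => ?_
  simp only [Function.comp_apply]
  rw [geDensity_rpow (by positivity) (mul_pos hl hx).le]
  ring

lemma tendsto_geDensity_rpow_nhdsGT (ha : 0 < a) (hl : 0 < l) (hv : 1 < v) :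
    Tendsto (fun x => geDensity l v x ^ a) (𝓝[>] 0) (𝓝 0) := by
  simpa using tendsto_comp_one_sub_exp_neg_mul_mul_geDensity_rpow_nhdsGT (g := fun _ => 1) hl
    (by linarith) (by simpa using tendsto_rpow_nhdsGT_zero (mul_pos ha (sub_pos.2 hv)))

end Density

section Scores

variable {a l v : ℝ}

lemma tendsto_geScoreRate_nhdsGT (hl : 0 < l) :
    Tendsto (geScoreRate l v) (𝓝[>] 0) (𝓝 (v / l)) := by
  have hexp : Tendsto (fun x => exp (-(l * x))) (𝓝[>] 0) (𝓝 1) := by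
    have : Continuous fun x => exp (-(l * x)) := by fun_prop
    simpa using this.continuousWithinAt (s := Ioi 0) (x := 0) |>.tendsto
  have hx : Tendsto (fun x : ℝ => x) (𝓝[>] 0) (𝓝 0) := tendsto_id.mono_left nhdsWithin_le_nhds
  have h := ((tendsto_const_nhds (x := 1 / l)).sub hx).add
    ((hexp.mul (tendsto_div_one_sub_exp_neg_mul_nhdsGT hl)).const_mul (v - 1))
  rw [show 1 / l - 0 + (v - 1) * (1 * l⁻¹) = v / l by field_simp; ring] at h
  refine h.congr fun x => ?_
  rw [geScoreRate]
  ring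

lemma tendsto_geScoreRate_mul_geDensity_rpow_atTop (ha : 0 < a) (hl : 0 < l) (hv : 0 ≤ v) :
    Tendsto (fun x => geScoreRate l v x * geDensity l v x ^ a) atTop (𝓝 0) := by
  have hf := tendsto_geDensity_rpow_atTop ha hl hv
  have hxf : Tendsto (fun x => x * geDensity l v x ^ a) atTop (𝓝 0) := by
    simpa using tendsto_rpow_mul_geDensity_rpow_atTop 1 ha hl hv
  have hratio : Tendsto (fun x => exp (-(l * x)) / (1 - exp (-(l * x)))) atTop (𝓝 0) := by
    have h := (tendsto_exp_neg_mul_atTop hl).div (tendsto_one_sub_exp_neg_mul_atTop hl) one_ne_zero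
    rwa [zero_div] at h
  have h := ((hf.const_mul (1 / l)).sub hxf).add ((hratio.mul hxf).const_mul (v - 1))
  simp only [mul_zero, sub_zero, add_zero] at h
  refine h.congr fun x => ?_
  rw [geScoreRate]
  ring

lemma tendsto_geScoreShape_atTop (hl : 0 < l) :
    Tendsto (geScoreShape l v) atTop (𝓝 (1 / v)) := by
  have h := ((continuousAt_log one_ne_zero).tendsto.comp
    (tendsto_one_sub_exp_neg_mul_atTop hl)).const_add (1 / v)
  rwa [log_one, add_zero] at h

end Scores

/-- For `α > 0`, `λ > 0` and `ν > 1`, the weighted score functions `u_λ(x) f(x; λ, ν)^α`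
and `u_ν(x) f(x; λ, ν)^α` tend to `0` both as `x → 0⁺` and as `x → ∞`. -/
theorem ge_weighted_scores_vanish (a l v : ℝ) (ha : 0 < a) (hl : 0 < l) (hv : 1 < v) :
    Tendsto (fun x => geScoreRate l v x * geDensity l v x ^ a)
      (nhdsWithin 0 (Ioi 0)) (nhds 0) ∧
    Tendsto (fun x => geScoreRate l v x * geDensity l v x ^ a) atTop (nhds 0) ∧
    Tendsto (fun x => geScoreShape l v x * geDensity l v x ^ a)
      (nhdsWithin 0 (Ioi 0)) (nhds 0) ∧
    Tendsto (fun x => geScoreShape l v x * geDensity l v x ^ a) atTop (nhds 0) := by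
  have hc : 0 < a * (v - 1) := mul_pos ha (sub_pos.2 hv)
  refine ⟨?_, tendsto_geScoreRate_mul_geDensity_rpow_atTop ha hl (by linarith), ?_, ?_⟩
  · simpa using (tendsto_geScoreRate_nhdsGT hl).mul (tendsto_geDensity_rpow_nhdsGT ha hl hv)
  · refine tendsto_comp_one_sub_exp_neg_mul_mul_geDensity_rpow_nhdsGT
      (g := fun y => 1 / v + log y) hl (by linarith) ?_
    simpa [add_mul] using ((tendsto_rpow_nhdsGT_zero hc).const_mul (1 / v)).add
      (tendsto_log_mul_rpow_nhdsGT_zero hc)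
  · simpa using (tendsto_geScoreShape_atTop hl).mul
      (tendsto_geDensity_rpow_atTop ha hl (by linarith))
end
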